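/- Let φ be an LTL formula and w an infinite word satisfying φ. Let G be the set of G-subformulas Gψ of φ such that w ⊨ FGψ. Then for almost every i ∈ ℕ: the formula ⋀_{Gψ∈G}(Gψ ∧ ⋀_{j=0}^{i} afG(ψ, w[j..i])) ∧ ⋀_{Gψ∈GG(φ)\G} ¬Gψ propositionally implies af(φ, w[0..i]). -/

import Mathlib

/-!
Induction on `φ`, for every word at once. For `X`, `F` and `U` the claim is transported from
the suffixes `w_k` at the witness positions: the premise restricts to them because
`w_k ⊨ FGψ ↔ w ⊨ FGψ`, and `af(φ, w[0..i])` keeps the disjunct `af(α, w[k..i])`, which is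
why only almost every `i` works. The case `Gα` needs no induction hypothesis: `af(Gα, w[0..i])`
unfolds to `Gα ∧ ⋀_{j ≤ i} af(α, w[j..i])`, and `af(α, u)` is recovered from `afG(α, u)`, the
two differing only at `G`-subformulas `Gχ`, and a `Gχ` true under the valuation is, by the
premise, one with `w ⊨ FGχ`, whose residuals `afG(χ, w[j..i])` the premise supplies.
-/

namespace LTLF

/-- LTL formulas in negation normal form over atomic propositions `Ap`. -/
inductive LTL (Ap : Type) : Type
  | tt : LTL Ap
  | ff : LTL Ap
  | atom : Ap → LTL Ap
  | natom : Ap → LTL Ap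
  | and : LTL Ap → LTL Ap → LTL Ap
  | or : LTL Ap → LTL Ap → LTL Ap
  | next : LTL Ap → LTL Ap
  | fut : LTL Ap → LTL Ap
  | glob : LTL Ap → LTL Ap
  | untl : LTL Ap → LTL Ap → LTL Ap

variable {Ap : Type}

/-- Infinite words over the alphabet `2^Ap`. -/
abbrev Word (Ap : Type) := ℕ → Set Ap

/-- The suffix `w_k`. -/
def suffix (w : Word Ap) (k : ℕ) : Word Ap := fun i => w (i + k)

/-- Standard LTL semantics on infinite words. -/
def Sat : LTL Ap → Word Ap → Prop
  | .tt, _ => True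
  | .ff, _ => False
  | .atom a, w => a ∈ w 0
  | .natom a, w => a ∉ w 0
  | .and φ ψ, w => Sat φ w ∧ Sat ψ w
  | .or φ ψ, w => Sat φ w ∨ Sat ψ w
  | .next φ, w => Sat φ (suffix w 1)
  | .fut φ, w => ∃ k, Sat φ (suffix w k)
  | .glob φ, w => ∀ k, Sat φ (suffix w k)
  | .untl φ ψ, w => ∃ k, Sat ψ (suffix w k) ∧ ∀ j < k, Sat φ (suffix w j)

open Classical in
/-- The "after function" `af(φ, ν)`. -/
noncomputable def af : LTL Ap → Set Ap → LTL Ap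
  | .tt, _ => .tt
  | .ff, _ => .ff
  | .atom a, ν => if a ∈ ν then .tt else .ff
  | .natom a, ν => if a ∈ ν then .ff else .tt
  | .and φ ψ, ν => .and (af φ ν) (af ψ ν)
  | .or φ ψ, ν => .or (af φ ν) (af ψ ν)
  | .next φ, _ => φ
  | .fut φ, ν => .or (af φ ν) (.fut φ)
  | .glob φ, ν => .and (af φ ν) (.glob φ)
  | .untl φ ψ, ν => .or (af ψ ν) (.and (af φ ν) (.untl φ ψ))

/-- `af` extended to finite words. -/
noncomputable def afw (φ : LTL Ap) (u : List (Set Ap)) : LTL Ap := u.foldl af φ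

open Classical in
/-- The variant `afG`, identical to `af` except `afG(Gφ, ν) = Gφ`. -/
noncomputable def afG : LTL Ap → Set Ap → LTL Ap
  | .tt, _ => .tt
  | .ff, _ => .ff
  | .atom a, ν => if a ∈ ν then .tt else .ff
  | .natom a, ν => if a ∈ ν then .ff else .tt
  | .and φ ψ, ν => .and (afG φ ν) (afG ψ ν)
  | .or φ ψ, ν => .or (afG φ ν) (afG ψ ν)
  | .next φ, _ => φ
  | .fut φ, ν => .or (afG φ ν) (.fut φ)
  | .glob φ, _ => .glob φ
  | .untl φ ψ, ν => .or (afG ψ ν) (.and (afG φ ν) (.untl φ ψ))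

/-- `afG` extended to finite words. -/
noncomputable def afGw (φ : LTL Ap) (u : List (Set Ap)) : LTL Ap := u.foldl afG φ

/-- The finite infix `w[i..j] = w[i] w[i+1] ⋯ w[j]`. -/
def infixW (w : Word Ap) (i j : ℕ) : List (Set Ap) :=
  (List.range (j + 1 - i)).map (fun k => w (i + k))

/-- The finite prefix `w[0..i]`. -/
def prefixW (w : Word Ap) (i : ℕ) : List (Set Ap) := infixW w 0 i

/-- Concatenation of a finite word with an infinite word. -/
def cat (u : List (Set Ap)) (w : Word Ap) : Word Ap :=
  fun k => if h : k < u.length then u.get ⟨k, h⟩ else w (k - u.length)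

/-- Propositional evaluation of a formula under a valuation `v`, treating
literals and temporal formulas (`X`, `F`, `G`, `U`) as opaque propositional atoms. -/
def propSat (v : LTL Ap → Prop) : LTL Ap → Prop
  | .tt => True
  | .ff => False
  | .and φ ψ => propSat v φ ∧ propSat v ψ
  | .or φ ψ => propSat v φ ∨ propSat v ψ
  | φ => v φ

/-- A valuation is consistent on literals: `a` and `¬a` get complementary values. -/
def LitConsistent (v : LTL Ap → Prop) : Prop :=
  ∀ a : Ap, v (.atom a) ↔ ¬ v (.natom a)

/-- Propositional implication `φ ⊨_p ψ`. -/
def PropImp (φ ψ : LTL Ap) : Prop :=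
  ∀ v : LTL Ap → Prop, LitConsistent v → propSat v φ → propSat v ψ

/-- Propositional equivalence `φ ≡_p ψ`. -/
def PropEquiv (φ ψ : LTL Ap) : Prop :=
  ∀ v : LTL Ap → Prop, LitConsistent v → (propSat v φ ↔ propSat v ψ)

/-- `⋀_{χ ∈ H} χ ⊨_p ψ` : the (possibly infinite) conjunction of the
hypotheses `H` propositionally implies `ψ`. -/
def PropImpSet (H : Set (LTL Ap)) (ψ : LTL Ap) : Prop :=
  ∀ v : LTL Ap → Prop, LitConsistent v → (∀ χ ∈ H, propSat v χ) → propSat v ψ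

/-- The list of subformulas of a formula. -/
def subfs : LTL Ap → List (LTL Ap)
  | .tt => [.tt]
  | .ff => [.ff]
  | .atom a => [.atom a]
  | .natom a => [.natom a]
  | .and φ ψ => .and φ ψ :: (subfs φ ++ subfs ψ)
  | .or φ ψ => .or φ ψ :: (subfs φ ++ subfs ψ)
  | .next φ => .next φ :: subfs φ
  | .fut φ => .fut φ :: subfs φ
  | .glob φ => .glob φ :: subfs φ
  | .untl φ ψ => .untl φ ψ :: (subfs φ ++ subfs ψ)

/-- `Gψ` is a `G`-subformula of `φ`. -/
def GSub (φ ψ : LTL Ap) : Prop := LTL.glob ψ ∈ subfs φ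

/-- A formula is `G`-free if it contains no occurrence of `G`. -/
def GFree : LTL Ap → Prop
  | .glob _ => False
  | .and φ ψ => GFree φ ∧ GFree ψ
  | .or φ ψ => GFree φ ∧ GFree ψ
  | .next φ => GFree φ
  | .fut φ => GFree φ
  | .untl φ ψ => GFree φ ∧ GFree ψ
  | _ => True

/-- `ind(w, ψ)`: the least index `j` with `w_j ⊨ Gψ`. -/
noncomputable def ind (w : Word Ap) (ψ : LTL Ap) : ℕ :=
  sInf {j | Sat (.glob ψ) (suffix w j)}

open Filter

section Words

variable {w : Word Ap}

@[simp] lemma suffix_suffix (w : Word Ap) (k m : ℕ) :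
    suffix (suffix w k) m = suffix w (m + k) :=
  funext fun i => by simp only [suffix, Nat.add_assoc]

lemma sat_fut_glob_suffix (ψ : LTL Ap) (w : Word Ap) (k : ℕ) :
    Sat (.fut (.glob ψ)) (suffix w k) ↔ Sat (.fut (.glob ψ)) w := by
  simp only [Sat, suffix_suffix]
  constructor
  · rintro ⟨m, hm⟩
    exact ⟨m + k, hm⟩
  · rintro ⟨m, hm⟩
    exact ⟨m, fun l => by simpa only [Nat.add_assoc, Nat.add_comm k m] using hm (l + k)⟩

@[simp] lemma length_infixW (j i : ℕ) : (infixW w j i).length = i + 1 - j := by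
  simp [infixW]

@[simp] lemma length_prefixW (i : ℕ) : (prefixW w i).length = i + 1 := by
  simp [prefixW]

lemma prefixW_eq_cons (i : ℕ) : prefixW w i = w 0 :: (prefixW w i).drop 1 := by
  simp [prefixW, infixW, List.range_succ_eq_map]

lemma infixW_eq_drop (j i : ℕ) : infixW w j i = (prefixW w i).drop j := by
  refine List.ext_getElem (by simp) fun n _ _ => ?_
  simp [prefixW, infixW]

lemma infixW_suffix (k j i : ℕ) : infixW (suffix w k) j i = infixW w (j + k) (i + k) := by
  refine List.ext_getElem (by simp; omega) fun n _ _ => ?_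
  simp only [infixW, suffix, List.getElem_map, List.getElem_range]
  ac_rfl

lemma prefixW_suffix {k i : ℕ} (hk : k ≤ i) :
    prefixW (suffix w k) (i - k) = (prefixW w i).drop k := by
  rw [prefixW, infixW_suffix, Nat.zero_add, Nat.sub_add_cancel hk, infixW_eq_drop]

end Words

section After

@[simp] lemma afw_cons (φ : LTL Ap) (ν : Set Ap) (u : List (Set Ap)) :
    afw φ (ν :: u) = afw (af φ ν) u := rfl

@[simp] lemma afGw_cons (φ : LTL Ap) (ν : Set Ap) (u : List (Set Ap)) :
    afGw φ (ν :: u) = afGw (afG φ ν) u := rfl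

@[simp] lemma afw_and (φ ψ : LTL Ap) (u : List (Set Ap)) :
    afw (.and φ ψ) u = .and (afw φ u) (afw ψ u) := by
  induction u generalizing φ ψ with
  | nil => rfl
  | cons ν u ih => simp [af, ih]

@[simp] lemma afw_or (φ ψ : LTL Ap) (u : List (Set Ap)) :
    afw (.or φ ψ) u = .or (afw φ u) (afw ψ u) := by
  induction u generalizing φ ψ with
  | nil => rfl
  | cons ν u ih => simp [af, ih]

@[simp] lemma afGw_and (φ ψ : LTL Ap) (u : List (Set Ap)) :
    afGw (.and φ ψ) u = .and (afGw φ u) (afGw ψ u) := by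
  induction u generalizing φ ψ with
  | nil => rfl
  | cons ν u ih => simp [afG, ih]

@[simp] lemma afGw_or (φ ψ : LTL Ap) (u : List (Set Ap)) :
    afGw (.or φ ψ) u = .or (afGw φ u) (afGw ψ u) := by
  induction u generalizing φ ψ with
  | nil => rfl
  | cons ν u ih => simp [afG, ih]

@[simp] lemma afGw_glob (φ : LTL Ap) (u : List (Set Ap)) : afGw (.glob φ) u = .glob φ := by
  induction u with
  | nil => rfl
  | cons ν u ih => simp [afG, ih]

@[simp] lemma afw_tt (u : List (Set Ap)) : afw (.tt : LTL Ap) u = .tt := by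
  induction u with
  | nil => rfl
  | cons ν u ih => simp [af, ih]

end After

section Subformulas

lemma GSub_glob_self (φ : LTL Ap) : GSub (.glob φ) φ := List.mem_cons_self

lemma GSub_af {φ χ : LTL Ap} {ν : Set Ap} (h : GSub (af φ ν) χ) : GSub φ χ := by
  induction φ with
  | atom a | natom a => simp only [af] at h; split at h <;> simp [GSub, subfs] at h
  | _ => simp only [GSub, subfs, af, List.mem_cons, List.mem_append] at *; aesop

end Subformulas

section Propositional

variable {v : LTL Ap → Prop}

@[simp] lemma propSat_and (φ ψ : LTL Ap) : propSat v (.and φ ψ) ↔ propSat v φ ∧ propSat v ψ :=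
  Iff.rfl

@[simp] lemma propSat_or (φ ψ : LTL Ap) : propSat v (.or φ ψ) ↔ propSat v φ ∨ propSat v ψ :=
  Iff.rfl

@[simp] lemma propSat_tt : propSat v (.tt : LTL Ap) := trivial

/-- Where `af` and `afG` differ, namely at `Gχ`, the extra conjunct `af(χ, ν)` of `af` is
supplied by the hypothesis on `χ`. -/
lemma propSat_afGw_af_of_afGw {ν : Set Ap} {u : List (Set Ap)} {φ : LTL Ap}
    (hG : ∀ χ, GSub φ χ → v (.glob χ) → propSat v (afGw χ (ν :: u)))
    (h : propSat v (afGw φ (ν :: u))) : propSat v (afGw (af φ ν) u) := by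
  induction φ with
  | and φ ψ ihφ ihψ =>
    simp only [afGw_cons, afG, af, afGw_and, propSat_and] at h ⊢
    exact ⟨ihφ (fun χ hχ => hG χ (by simp_all [GSub, subfs])) h.1,
      ihψ (fun χ hχ => hG χ (by simp_all [GSub, subfs])) h.2⟩
  | or φ ψ ihφ ihψ =>
    simp only [afGw_cons, afG, af, afGw_or, propSat_or] at h ⊢
    exact h.imp (ihφ (fun χ hχ => hG χ (by simp_all [GSub, subfs])))
      (ihψ (fun χ hχ => hG χ (by simp_all [GSub, subfs])))
  | fut φ ihφ =>
    simp only [afGw_cons, afG, af, afGw_or, propSat_or] at h ⊢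
    exact h.imp_left (ihφ (fun χ hχ => hG χ (by simp_all [GSub, subfs])))
  | glob φ ihφ =>
    simp only [afGw_cons, afG, afGw_glob] at h
    simp only [af, afGw_and, afGw_glob, propSat_and]
    exact ⟨ihφ (fun χ hχ => hG χ (by simp_all [GSub, subfs])) (hG φ (GSub_glob_self φ) h), h⟩
  | untl φ ψ ihφ ihψ =>
    simp only [afGw_cons, afG, af, afGw_or, afGw_and, propSat_or, propSat_and] at h ⊢
    exact h.imp (ihψ (fun χ hχ => hG χ (by simp_all [GSub, subfs])))
      (And.imp_left (ihφ (fun χ hχ => hG χ (by simp_all [GSub, subfs]))))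
  | _ => exact h

lemma propSat_afw_of_afGw {u : List (Set Ap)} {φ : LTL Ap}
    (hG : ∀ χ, GSub φ χ → v (.glob χ) → ∀ n < u.length, propSat v (afGw χ (u.drop n)))
    (h : propSat v (afGw φ u)) : propSat v (afw φ u) := by
  induction u generalizing φ with
  | nil => exact h
  | cons ν u ih =>
    refine ih (fun χ hχ hvχ n hn => ?_) (propSat_afGw_af_of_afGw ?_ h)
    · exact hG χ (GSub_af hχ) hvχ (n + 1) (by simpa using hn)
    · exact fun χ hχ hvχ => hG χ hχ hvχ 0 (by simp)

lemma propSat_afw_fut {α : LTL Ap} {u : List (Set Ap)} {n : ℕ} (hn : n < u.length)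
    (h : propSat v (afw α (u.drop n))) : propSat v (afw (.fut α) u) := by
  induction u generalizing n with
  | nil => simp at hn
  | cons ν u ih =>
    simp only [afw_cons, af, afw_or, propSat_or]
    cases n with
    | zero => exact Or.inl h
    | succ n => exact Or.inr (ih (by simpa using hn) h)

lemma propSat_afw_untl {α β : LTL Ap} {u : List (Set Ap)} {n : ℕ} (hn : n < u.length)
    (hβ : propSat v (afw β (u.drop n))) (hα : ∀ m < n, propSat v (afw α (u.drop m))) :
    propSat v (afw (.untl α β) u) := by
  induction u generalizing n with
  | nil => simp at hn
  | cons ν u ih =>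
    simp only [afw_cons, af, afw_or, afw_and, propSat_or, propSat_and]
    cases n with
    | zero => exact Or.inl hβ
    | succ n =>
      exact Or.inr ⟨hα 0 n.succ_pos,
        ih (by simpa using hn) hβ fun m hm => hα (m + 1) (by omega)⟩

lemma propSat_afw_glob {α : LTL Ap} {u : List (Set Ap)} (hG : v (.glob α))
    (hα : ∀ m < u.length, propSat v (afw α (u.drop m))) : propSat v (afw (.glob α) u) := by
  induction u with
  | nil => exact hG
  | cons ν u ih =>
    simp only [afw_cons, af, afw_and, propSat_and]
    exact ⟨hα 0 (by simp), ih fun m hm => hα (m + 1) (by simpa using hm)⟩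

end Propositional

/-- The left-hand side of the master implication at position `i`, as a condition on the
valuation `v`. -/
def Premise (φ : LTL Ap) (w : Word Ap) (i : ℕ) (v : LTL Ap → Prop) : Prop :=
  (∀ ψ, GSub φ ψ → Sat (.fut (.glob ψ)) w →
    propSat v (.glob ψ) ∧ ∀ j ≤ i, propSat v (afGw ψ (infixW w j i))) ∧
  (∀ ψ, GSub φ ψ → ¬ Sat (.fut (.glob ψ)) w → ¬ propSat v (.glob ψ))

namespace Premise

variable {φ α : LTL Ap} {w : Word Ap} {i : ℕ} {v : LTL Ap → Prop}

lemma mono (hsub : ∀ χ, GSub α χ → GSub φ χ) (h : Premise φ w i v) : Premise α w i v :=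
  ⟨fun ψ hψ => h.1 ψ (hsub ψ hψ), fun ψ hψ => h.2 ψ (hsub ψ hψ)⟩

lemma suffix {k : ℕ} (hk : k ≤ i) (h : Premise φ w i v) : Premise φ (suffix w k) (i - k) v := by
  refine ⟨fun ψ hψ hFG => ?_, fun ψ hψ hFG => h.2 ψ hψ (by rwa [sat_fut_glob_suffix] at hFG)⟩
  obtain ⟨hG, hafG⟩ := h.1 ψ hψ ((sat_fut_glob_suffix ψ w k).1 hFG)
  refine ⟨hG, fun j hj => ?_⟩
  rw [infixW_suffix, Nat.sub_add_cancel hk]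
  exact hafG (j + k) (by omega)

lemma afGw_of_glob {χ : LTL Ap} (h : Premise φ w i v) (hχ : GSub φ χ) (hvχ : v (.glob χ))
    {j : ℕ} (hj : j ≤ i) : propSat v (afGw χ (infixW w j i)) := by
  by_cases hFG : Sat (.fut (.glob χ)) w
  · exact (h.1 χ hχ hFG).2 j hj
  · exact absurd hvχ (h.2 χ hχ hFG)

end Premise

variable {w : Word Ap}

lemma eventually_premise_suffix (φ : LTL Ap) {α : LTL Ap} {k : ℕ}
    (hsub : ∀ χ, GSub α χ → GSub φ χ)
    (h : ∀ᶠ i in atTop, ∀ v, Premise α (suffix w k) i v →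
      propSat v (afw α (prefixW (suffix w k) i))) :
    ∀ᶠ i in atTop, ∀ v, Premise φ w i v → propSat v (afw α ((prefixW w i).drop k)) := by
  filter_upwards [(tendsto_sub_atTop_nat k).eventually h, eventually_ge_atTop k]
    with i hi hki v hv
  rw [← prefixW_suffix hki]
  exact hi v ((hv.suffix hki).mono hsub)

lemma propSat_afw_glob_of_premise {α : LTL Ap} {i : ℕ} {v : LTL Ap → Prop}
    (hw : Sat (.glob α) w) (hv : Premise (.glob α) w i v) :
    propSat v (afw (.glob α) (prefixW w i)) := by
  have hFG : Sat (.fut (.glob α)) w := ⟨0, by simpa [Sat] using hw⟩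
  obtain ⟨hG, hafG⟩ := hv.1 α (GSub_glob_self α) hFG
  refine propSat_afw_glob hG fun m hm => ?_
  rw [← infixW_eq_drop]
  refine propSat_afw_of_afGw (fun χ hχ hvχ n hn => ?_) (hafG m (by simpa using hm))
  rw [infixW_eq_drop, List.drop_drop, ← infixW_eq_drop]
  exact hv.afGw_of_glob (by simp_all [GSub, subfs]) hvχ (by simp at hn; omega)

theorem eventually_premise_imp_afw {φ : LTL Ap} (hw : Sat φ w) :
    ∀ᶠ i in atTop, ∀ v, Premise φ w i v → propSat v (afw φ (prefixW w i)) := by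
  induction φ generalizing w with
  | tt => simp
  | ff => exact hw.elim
  | atom a | natom a =>
    refine Eventually.of_forall fun i v _ => ?_
    rw [prefixW_eq_cons]
    simp_all [Sat, af]
  | and a b iha ihb =>
    filter_upwards [iha hw.1, ihb hw.2] with i ha hb v hv
    rw [afw_and]
    exact ⟨ha v (hv.mono fun _ hχ => by simp_all [GSub, subfs]),
      hb v (hv.mono fun _ hχ => by simp_all [GSub, subfs])⟩
  | or a b iha ihb =>
    rcases hw with hw | hw
    · filter_upwards [iha hw] with i ha v hv
      exact afw_or a b _ ▸ Or.inl (ha v (hv.mono fun _ hχ => by simp_all [GSub, subfs]))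
    · filter_upwards [ihb hw] with i hb v hv
      exact afw_or a b _ ▸ Or.inr (hb v (hv.mono fun _ hχ => by simp_all [GSub, subfs]))
  | next a iha =>
    filter_upwards
      [eventually_premise_suffix (.next a) (fun _ hχ => by simp_all [GSub, subfs]) (iha hw)]
      with i ha v hv
    rw [prefixW_eq_cons]
    exact ha v hv
  | fut a iha =>
    obtain ⟨k, hk⟩ := hw
    filter_upwards
      [eventually_premise_suffix (.fut a) (fun _ hχ => by simp_all [GSub, subfs]) (iha hk),
        eventually_ge_atTop k] with i ha hki v hv
    exact propSat_afw_fut (by simp; omega) (ha v hv)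
  | glob a => exact Eventually.of_forall fun i v hv => propSat_afw_glob_of_premise hw hv
  | untl a b iha ihb =>
    obtain ⟨k, hkb, hka⟩ := hw
    have hsub : ∀ χ, GSub a χ ∨ GSub b χ → GSub (.untl a b) χ := fun _ hχ => by
      simp_all [GSub, subfs]
    have ha : ∀ᶠ i in atTop, ∀ m ∈ {m | m < k}, ∀ v, Premise (.untl a b) w i v →
        propSat v (afw a ((prefixW w i).drop m)) :=
      (eventually_all_finite (Set.finite_lt_nat k)).2 fun m hm =>
        eventually_premise_suffix _ (fun χ hχ => hsub χ (.inl hχ)) (iha (hka m hm))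
    filter_upwards [ha, eventually_premise_suffix _ (fun χ hχ => hsub χ (.inr hχ)) (ihb hkb),
      eventually_ge_atTop k] with i ha hb hki v hv
    exact propSat_afw_untl (by simp; omega) (hb v hv) fun m hm => ha m hm v hv

/-- if `w ⊨ φ` then for almost every `i`, the conjunction of
`Gψ ∧ ⋀_{j=0}^i afG(ψ, w[j..i])` over `Gψ ∈ G` and of the atoms `¬Gψ` for
`Gψ ∈ GG(φ)\G` (encoded by forcing `v(Gψ)` false) propositionally implies
`af(φ, w[0..i])`, where `G = {Gψ ∈ GG(φ) | w ⊨ FGψ}`. -/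
theorem master_implication_eventually {Ap : Type} (φ : LTL Ap) (w : Word Ap)
    (hw : Sat φ w) :
    ∃ N : ℕ, ∀ i ≥ N, ∀ v : LTL Ap → Prop, LitConsistent v →
      (∀ ψ : LTL Ap, GSub φ ψ → Sat (LTL.fut (LTL.glob ψ)) w →
        propSat v (LTL.glob ψ) ∧ ∀ j ≤ i, propSat v (afGw ψ (infixW w j i))) →
      (∀ ψ : LTL Ap, GSub φ ψ → ¬ Sat (LTL.fut (LTL.glob ψ)) w →
        ¬ propSat v (LTL.glob ψ)) →
      propSat v (afw φ (prefixW w i)) := by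
  obtain ⟨N, hN⟩ := eventually_atTop.1 (eventually_premise_imp_afw hw)
  exact ⟨N, fun i hi v _ hpos hneg => hN i hi v ⟨hpos, hneg⟩⟩

end LTLF
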